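/- Let g₁, g₂ ∈ G be such that g₁, g₂, and the product g₁g₂ are each bounded elements, and suppose l(g₁) > 1. Let h ∈ G be such that l(h) = 1 and l(h g₁ h⁻¹) < l(g₁). Then: (i) l(h g₁ h⁻¹) = l(g₁) − 2; (ii) if l(g₂) > 1, then l(h g₂ h⁻¹) = l(g₂) − 2; (iii) if l(g₂) ≤ 1, then l(h g₂ h⁻¹) ≤ 1. -/

import Mathlib

variable {G : Type*} [Group G]

/-- A reduced expression with respect to the factors `A` and `B`: every letter lies in
`(A ∪ B) \ (A ∩ B)` and consecutive letters lie in different factors. -/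
def IsReducedWord (A B : Subgroup G) (w : List G) : Prop :=
  (∀ x ∈ w, (x ∈ A ∨ x ∈ B) ∧ ¬(x ∈ A ∧ x ∈ B)) ∧
    w.Chain' fun x y => ¬(x ∈ A ∧ y ∈ A) ∧ ¬(x ∈ B ∧ y ∈ B)

/-- `G` is the internal amalgamated free product of its subgroups `A` and `B` over `A ⊓ B`:
`A` and `B` generate `G` and no reduced word of length at least `2` represents the identity
(this is the classical characterization of the canonical map from the abstract amalgamated
free product onto `G` being an isomorphism). -/
def IsAmalgamatedProduct (A B : Subgroup G) : Prop :=
  A ⊔ B = ⊤ ∧ ∀ w : List G, IsReducedWord A B w → 2 ≤ w.length → w.prod ≠ 1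

/-- The length `l(g)` of an element: the (common) number of letters of a reduced expression
of `g`; it is `0` for elements of `A ⊓ B` (which admit no reduced expression). -/
noncomputable def amalgLen (A B : Subgroup G) (g : G) : ℕ :=
  sInf {r | ∃ w : List G, IsReducedWord A B w ∧ w.prod = g ∧ w.length = r}

/-- A subgroup `H` is bounded if the lengths of its elements are bounded. -/
def BoundedSubgroup (A B : Subgroup G) (H : Subgroup G) : Prop :=
  ∃ N : ℕ, ∀ h ∈ H, amalgLen A B h ≤ N

/-- An element is bounded if the cyclic subgroup it generates is bounded. -/
def BoundedElement (A B : Subgroup G) (g : G) : Prop :=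
  BoundedSubgroup A B (Subgroup.zpowers g)

/-!
A bounded element with reduced expression `x ⋯ y` must satisfy `y x ∈ A ∩ B`: otherwise its
conjugate by `y` (still bounded, since `l` is subadditive) has a cyclically reduced expression,
and the powers of such an element have reduced expressions of unbounded length.
Write `g₁ = x m y` in this way. If `h x ∉ A ∩ B`, gluing `h` and `h⁻¹` onto the ends of `x m y`
cannot shorten it, so `l(h g₁ h⁻¹) < l(g₁)` forces `h x ∈ A ∩ B`; then
`h g₁ h⁻¹ = (h x) m (y h⁻¹)` with outer factors in `A ∩ B`, of length `l(m) = l(g₁) - 2`.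
Boundedness of `g₁ g₂` shows in the same way that the first letter `x₂` of `g₂` satisfies
`y x₂ ∈ A ∩ B`, resp. that a one-letter `g₂` lies in the factor of `x`, and (ii), (iii) follow.
-/

section Letters

variable {A B : Subgroup G} {x y z k : G}

def IsLetter (A B : Subgroup G) (x : G) : Prop := (x ∈ A ∨ x ∈ B) ∧ ¬(x ∈ A ∧ x ∈ B)

def Alternate (A B : Subgroup G) (x y : G) : Prop := ¬(x ∈ A ∧ y ∈ A) ∧ ¬(x ∈ B ∧ y ∈ B)

def SameFactor (A B : Subgroup G) (x y : G) : Prop := (x ∈ A ↔ y ∈ A) ∧ (x ∈ B ↔ y ∈ B)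

theorem SameFactor.refl (x : G) : SameFactor A B x x := ⟨Iff.rfl, Iff.rfl⟩

theorem SameFactor.symm (h : SameFactor A B x y) : SameFactor A B y x := ⟨h.1.symm, h.2.symm⟩

theorem SameFactor.trans (h : SameFactor A B x y) (h' : SameFactor A B y z) :
    SameFactor A B x z :=
  ⟨h.1.trans h'.1, h.2.trans h'.2⟩

theorem sameFactor_inv (x : G) : SameFactor A B x⁻¹ x := ⟨inv_mem_iff, inv_mem_iff⟩

theorem sameFactor_mem_inf_mul (hk : k ∈ A ⊓ B) (x : G) : SameFactor A B (k * x) x :=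
  ⟨mul_mem_cancel_left (Subgroup.mem_inf.1 hk).1, mul_mem_cancel_left (Subgroup.mem_inf.1 hk).2⟩

theorem sameFactor_of_mul_mem_inf (h : x * y ∈ A ⊓ B) : SameFactor A B x y := by
  obtain ⟨hA, hB⟩ := Subgroup.mem_inf.1 h
  exact ⟨⟨fun hx => (mul_mem_cancel_left hx).1 hA, fun hy => (mul_mem_cancel_right hy).1 hA⟩,
    ⟨fun hx => (mul_mem_cancel_left hx).1 hB, fun hy => (mul_mem_cancel_right hy).1 hB⟩⟩

theorem mem_inf_or_isLetter_of_mem (hx : x ∈ A ∨ x ∈ B) : x ∈ A ⊓ B ∨ IsLetter A B x := by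
  by_cases hK : x ∈ A ⊓ B
  · exact Or.inl hK
  · exact Or.inr ⟨hx, fun h => hK (Subgroup.mem_inf.2 h)⟩

theorem mul_mem_or_mul_mem_of_mem_inf (hx : x ∈ A ∨ x ∈ B) (hk : k ∈ A ⊓ B) :
    x * k ∈ A ∨ x * k ∈ B :=
  hx.imp (mul_mem · (Subgroup.mem_inf.1 hk).1) (mul_mem · (Subgroup.mem_inf.1 hk).2)

theorem IsLetter.of_sameFactor (hx : IsLetter A B x) (h : SameFactor A B x y) :
    IsLetter A B y := by
  rwa [IsLetter, ← h.1, ← h.2]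

theorem Alternate.symm (h : Alternate A B x y) : Alternate A B y x :=
  ⟨fun h' => h.1 h'.symm, fun h' => h.2 h'.symm⟩

theorem Alternate.of_sameFactor {x' y' : G} (h : Alternate A B x y) (hx : SameFactor A B x x')
    (hy : SameFactor A B y y') : Alternate A B x' y' := by
  rwa [Alternate, ← hx.1, ← hx.2, ← hy.1, ← hy.2]

theorem IsLetter.sameFactor_of_not_alternate (hx : IsLetter A B x) (hy : IsLetter A B y)
    (h : ¬Alternate A B x y) : SameFactor A B x y := by
  unfold IsLetter Alternate SameFactor at *
  tauto

theorem IsLetter.mul (hx : IsLetter A B x) (hxy : SameFactor A B x y) (h : x * y ∉ A ⊓ B) :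
    IsLetter A B (x * y) ∧ SameFactor A B (x * y) x := by
  have hA : x ∈ A → x * y ∈ A := fun hx => mul_mem hx (hxy.1.1 hx)
  have hB : x ∈ B → x * y ∈ B := fun hx => mul_mem hx (hxy.2.1 hx)
  have hK : ¬(x * y ∈ A ∧ x * y ∈ B) := fun h' => h (Subgroup.mem_inf.2 h')
  unfold IsLetter SameFactor at *
  tauto

end Letters

section ReducedWords

variable {A B : Subgroup G} {x y : G} {u v w : List G}

theorem isReducedWord_iff :
    IsReducedWord A B w ↔ (∀ x ∈ w, IsLetter A B x) ∧ w.IsChain (Alternate A B) :=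
  Iff.rfl

theorem isReducedWord_nil : IsReducedWord A B [] := ⟨by simp, List.isChain_nil⟩

theorem isReducedWord_cons :
    IsReducedWord A B (x :: w) ↔
      IsLetter A B x ∧ (∀ y ∈ w.head?, Alternate A B x y) ∧ IsReducedWord A B w := by
  rw [isReducedWord_iff, isReducedWord_iff, List.forall_mem_cons, List.isChain_cons]
  exact ⟨fun ⟨⟨hx, hw⟩, hxw, hc⟩ => ⟨hx, hxw, hw, hc⟩, fun ⟨hx, hxw, hw, hc⟩ => ⟨⟨hx, hw⟩, hxw, hc⟩⟩

theorem isReducedWord_singleton : IsReducedWord A B [x] ↔ IsLetter A B x := by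
  simp [isReducedWord_cons, isReducedWord_nil]

theorem isReducedWord_append :
    IsReducedWord A B (u ++ v) ↔ IsReducedWord A B u ∧ IsReducedWord A B v ∧
      ∀ x ∈ u.getLast?, ∀ y ∈ v.head?, Alternate A B x y := by
  simp only [isReducedWord_iff, List.forall_mem_append, List.isChain_append]
  constructor
  · exact fun ⟨⟨hu, hv⟩, hcu, hcv, hj⟩ => ⟨⟨hu, hcu⟩, ⟨hv, hcv⟩, hj⟩
  · exact fun ⟨⟨hu, hcu⟩, ⟨hv, hcv⟩, hj⟩ => ⟨⟨hu, hv⟩, hcu, hcv, hj⟩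

theorem IsReducedWord.cons_of_sameFactor (hw : IsReducedWord A B (x :: w))
    (h : SameFactor A B x y) : IsReducedWord A B (y :: w) := by
  obtain ⟨hx, hxw, hw⟩ := isReducedWord_cons.1 hw
  exact isReducedWord_cons.2
    ⟨hx.of_sameFactor h, fun z hz => (hxw z hz).of_sameFactor h (.refl z), hw⟩

theorem IsReducedWord.inv (hw : IsReducedWord A B w) :
    IsReducedWord A B (w.map (·⁻¹)).reverse := by
  refine isReducedWord_iff.2 ⟨fun z hz => ?_, ?_⟩
  · obtain ⟨x, hx, rfl⟩ := List.mem_map.1 (List.mem_reverse.1 hz)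
    exact IsLetter.of_sameFactor (hw.1 x hx) (sameFactor_inv x).symm
  · rw [List.isChain_reverse, List.isChain_map]
    exact hw.2.imp fun x y h =>
      (Alternate.symm h).of_sameFactor (sameFactor_inv y).symm (sameFactor_inv x).symm

theorem IsReducedWord.exists_join_of_mul_notMem (hu : IsReducedWord A B (u ++ [x]))
    (hv : IsReducedWord A B (y :: v)) (hxy : x * y ∉ A ⊓ B) :
    ∃ c, (c = [x, y] ∨ c = [x * y]) ∧ IsReducedWord A B (u ++ c ++ v) ∧
      (u ++ c ++ v).prod = (u ++ [x]).prod * (y :: v).prod := by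
  obtain ⟨hu', hx, hux⟩ := isReducedWord_append.1 hu
  have hx := isReducedWord_singleton.1 hx
  by_cases halt : Alternate A B x y
  · refine ⟨[x, y], Or.inl rfl, ?_, by simp [mul_assoc]⟩
    rw [show u ++ [x, y] ++ v = u ++ [x] ++ y :: v by simp]
    exact isReducedWord_append.2 ⟨hu, hv, by simpa using halt⟩
  · have hs := hx.sameFactor_of_not_alternate (isReducedWord_cons.1 hv).1 halt
    obtain ⟨-, hxy_x⟩ := hx.mul hs hxy
    refine ⟨[x * y], Or.inr rfl, ?_, by simp [mul_assoc]⟩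
    rw [List.append_assoc, List.singleton_append]
    refine isReducedWord_append.2 ⟨hu', hv.cons_of_sameFactor (hxy_x.trans hs).symm, ?_⟩
    rintro a ha _ ⟨⟩
    exact (hux a ha x rfl).of_sameFactor (.refl a) hxy_x.symm

end ReducedWords

section Length

variable {A B : Subgroup G} {g : G} {w w' : List G}

def ReducedProdNeOne (A B : Subgroup G) : Prop :=
  ∀ w : List G, IsReducedWord A B w → 2 ≤ w.length → w.prod ≠ 1

theorem IsReducedWord.eq_nil_of_prod_mem_inf (hAB : ReducedProdNeOne A B)
    (hw : IsReducedWord A B w) (hp : w.prod ∈ A ⊓ B) : w = [] := by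
  rcases w with _ | ⟨x, _ | ⟨y, u⟩⟩
  · rfl
  · exact absurd (Subgroup.mem_inf.1 (by simpa using hp)) (isReducedWord_singleton.1 hw).2
  · have hw' := hw.cons_of_sameFactor (sameFactor_mem_inf_mul (inv_mem hp) x).symm
    exact absurd (by simp [mul_assoc]) (hAB _ hw' (by simp))

theorem IsReducedWord.length_eq_of_prod_eq (hAB : ReducedProdNeOne A B)
    (hw : IsReducedWord A B w) (hw' : IsReducedWord A B w') (hp : w.prod = w'.prod) :
    w.length = w'.length := by
  induction w generalizing w' with
  | nil => rw [hw'.eq_nil_of_prod_mem_inf hAB (hp ▸ one_mem _)]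
  | cons x u ih =>
    rcases w' with _ | ⟨y, u'⟩
    · exact absurd (hw.eq_nil_of_prod_mem_inf hAB (hp ▸ one_mem _)) (List.cons_ne_nil _ _)
    have hk : x⁻¹ * y ∈ A ⊓ B := by
      -- otherwise joining the inverse of `x :: u` to `y :: u'` gives a reduced word for `1`
      by_contra hk
      have hinv : IsReducedWord A B ((u.map (·⁻¹)).reverse ++ [x⁻¹]) := by simpa using hw.inv
      obtain ⟨c, hc, hred, hprod⟩ := hinv.exists_join_of_mul_notMem hw' hk
      refine absurd (hred.eq_nil_of_prod_mem_inf hAB ?_) (by rcases hc with rfl | rfl <;> simp)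
      have hinv_prod : ((u.map (·⁻¹)).reverse ++ [x⁻¹]).prod = (x :: u).prod⁻¹ := by
        simp [List.prod_inv_reverse]
      rw [hprod, hinv_prod, hp, inv_mul_cancel]
      exact one_mem _
    obtain ⟨-, -, hu⟩ := isReducedWord_cons.1 hw
    obtain ⟨-, -, hu'⟩ := isReducedWord_cons.1 hw'
    have hu_prod : u.prod = x⁻¹ * (y :: u').prod := eq_inv_mul_of_mul_eq (by simpa using hp)
    rcases u' with _ | ⟨z, u'⟩
    · rw [hu.eq_nil_of_prod_mem_inf hAB (by simpa [hu_prod] using hk)]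
      rfl
    have hv := hu'.cons_of_sameFactor (sameFactor_mem_inf_mul hk z).symm
    simpa using ih hu hv (by simp [hu_prod, mul_assoc])

theorem IsReducedWord.amalgLen_prod (hAB : ReducedProdNeOne A B) (hw : IsReducedWord A B w) :
    amalgLen A B w.prod = w.length :=
  le_antisymm (Nat.sInf_le ⟨w, hw, rfl, rfl⟩) <| le_csInf ⟨_, w, hw, rfl, rfl⟩
    fun _ ⟨_, hw', hp, hl⟩ => hl ▸ (hw.length_eq_of_prod_eq hAB hw' hp.symm).le

theorem exists_isReducedWord_of_amalgLen_ne_zero (h : amalgLen A B g ≠ 0) :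
    ∃ w, IsReducedWord A B w ∧ w.prod = g ∧ w.length = amalgLen A B g := by
  have hne : {r | ∃ w : List G, IsReducedWord A B w ∧ w.prod = g ∧ w.length = r}.Nonempty := by
    by_contra he
    exact h (by rw [amalgLen, Set.not_nonempty_iff_eq_empty.1 he, Nat.sInf_empty])
  exact Nat.sInf_mem hne

theorem isLetter_of_amalgLen_eq_one (h : amalgLen A B g = 1) : IsLetter A B g := by
  obtain ⟨w, hw, rfl, hl⟩ := exists_isReducedWord_of_amalgLen_ne_zero (h ▸ one_ne_zero)
  obtain ⟨x, rfl⟩ := List.length_eq_one_iff.1 (hl.trans h)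
  simpa using isReducedWord_singleton.1 hw

theorem exists_isReducedWord_of_one_lt_amalgLen (h : 1 < amalgLen A B g) :
    ∃ x m y, IsReducedWord A B (x :: m ++ [y]) ∧ (x :: m ++ [y]).prod = g ∧
      amalgLen A B g = m.length + 2 := by
  obtain ⟨w, hw, rfl, hl⟩ := exists_isReducedWord_of_amalgLen_ne_zero h.ne_bot
  rw [← hl] at h ⊢
  obtain _ | ⟨x, t⟩ := w
  · simp at h
  obtain rfl | ⟨m, y, rfl⟩ := List.eq_nil_or_concat t
  · simp at h
  exact ⟨x, m, y, by simpa using hw, by simp, by simp⟩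

theorem amalgLen_eq_zero_of_mem_inf (hAB : ReducedProdNeOne A B) (hg : g ∈ A ⊓ B) :
    amalgLen A B g = 0 := by
  by_contra h
  obtain ⟨w, hw, rfl, hl⟩ := exists_isReducedWord_of_amalgLen_ne_zero h
  exact h (by rw [← hl, hw.eq_nil_of_prod_mem_inf hAB hg, List.length_nil])

theorem amalgLen_le_one_of_mem (hAB : ReducedProdNeOne A B) (hg : g ∈ A ∨ g ∈ B) :
    amalgLen A B g ≤ 1 := by
  rcases mem_inf_or_isLetter_of_mem hg with hK | hL
  · simp [amalgLen_eq_zero_of_mem_inf hAB hK]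
  · exact Nat.sInf_le ⟨[g], isReducedWord_singleton.2 hL, by simp, rfl⟩

end Length

section Subadditivity

variable {A B : Subgroup G} {g x k : G} {w : List G}

theorem IsReducedWord.mul_prod_mem_inf_or_exists (hw : IsReducedWord A B w)
    (hx : x ∈ A ∨ x ∈ B) :
    x * w.prod ∈ A ⊓ B ∨
      ∃ v, IsReducedWord A B v ∧ v.prod = x * w.prod ∧ v.length ≤ w.length + 1 := by
  rcases w with _ | ⟨a, u⟩
  · exact (mem_inf_or_isLetter_of_mem hx).imp (by simpa using ·)
      fun hL => ⟨[x], isReducedWord_singleton.2 hL, by simp, by simp⟩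
  rcases mem_inf_or_isLetter_of_mem hx with hxK | hxL
  · exact Or.inr ⟨x * a :: u, hw.cons_of_sameFactor (sameFactor_mem_inf_mul hxK a).symm,
      by simp [mul_assoc], by simp⟩
  by_cases hxa : x * a ∈ A ⊓ B
  · rcases u with _ | ⟨b, u⟩
    · exact Or.inl (by simpa using hxa)
    · obtain ⟨-, -, hu⟩ := isReducedWord_cons.1 hw
      exact Or.inr ⟨x * a * b :: u, hu.cons_of_sameFactor (sameFactor_mem_inf_mul hxa b).symm,
        by simp [mul_assoc], by simp⟩
  · obtain ⟨c, hc, hred, hprod⟩ := IsReducedWord.exists_join_of_mul_notMem (u := [])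
      (isReducedWord_singleton.2 hxL) hw hxa
    exact Or.inr ⟨c ++ u, by simpa using hred, by simpa using hprod,
      by rcases hc with rfl | rfl <;> simp⟩

theorem IsAmalgamatedProduct.mem_inf_or_exists_isReducedWord (hG : IsAmalgamatedProduct A B)
    (g : G) : g ∈ A ⊓ B ∨ ∃ w, IsReducedWord A B w ∧ w.prod = g := by
  have step : ∀ x ∈ (A : Set G) ∪ B, ∀ g : G,
      (g ∈ A ⊓ B ∨ ∃ w, IsReducedWord A B w ∧ w.prod = g) →
        x * g ∈ A ⊓ B ∨ ∃ w, IsReducedWord A B w ∧ w.prod = x * g := by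
    rintro x hx g (hg | ⟨w, hw, rfl⟩)
    · exact (mem_inf_or_isLetter_of_mem (mul_mem_or_mul_mem_of_mem_inf hx hg)).imp_right
        fun hL => ⟨[x * g], isReducedWord_singleton.2 hL, List.prod_singleton⟩
    · exact (hw.mul_prod_mem_inf_or_exists hx).imp_right fun ⟨v, hv, hp, _⟩ => ⟨v, hv, hp⟩
  have hg : g ∈ Subgroup.closure ((A : Set G) ∪ B) := by
    rw [Subgroup.closure_union, Subgroup.closure_eq, Subgroup.closure_eq, hG.1]
    trivial
  induction hg using Subgroup.closure_induction_left with
  | one => exact Or.inl (one_mem _)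
  | mul_left x hx y _ ih => exact step x hx y ih
  | inv_mul_cancel x hx y _ ih => exact step x⁻¹ (hx.imp inv_mem inv_mem) y ih

theorem mem_inf_or_isLetter_of_amalgLen_le_one (hG : IsAmalgamatedProduct A B)
    (h : amalgLen A B g ≤ 1) : g ∈ A ⊓ B ∨ IsLetter A B g := by
  rcases Nat.le_one_iff_eq_zero_or_eq_one.1 h with h | h
  · refine Or.inl ((hG.mem_inf_or_exists_isReducedWord g).elim id ?_)
    rintro ⟨w, hw, rfl⟩
    rw [hw.amalgLen_prod hG.2, List.length_eq_zero_iff] at h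
    simp [h]
  · exact Or.inr (isLetter_of_amalgLen_eq_one h)

theorem amalgLen_mul_le_add_one (hG : IsAmalgamatedProduct A B) (hx : x ∈ A ∨ x ∈ B) (g : G) :
    amalgLen A B (x * g) ≤ amalgLen A B g + 1 := by
  rcases hG.mem_inf_or_exists_isReducedWord g with hg | ⟨w, hw, rfl⟩
  · exact (amalgLen_le_one_of_mem hG.2 (mul_mem_or_mul_mem_of_mem_inf hx hg)).trans
      (Nat.le_add_left _ _)
  rcases hw.mul_prod_mem_inf_or_exists hx with hK | ⟨v, hv, hp, hl⟩
  · simp [amalgLen_eq_zero_of_mem_inf hG.2 hK]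
  · rwa [← hp, hv.amalgLen_prod hG.2, hw.amalgLen_prod hG.2]

theorem amalgLen_mem_inf_mul_le (hG : IsAmalgamatedProduct A B) (hk : k ∈ A ⊓ B) (g : G) :
    amalgLen A B (k * g) ≤ amalgLen A B g := by
  rcases hG.mem_inf_or_exists_isReducedWord g with hg | ⟨_ | ⟨a, u⟩, hw, rfl⟩
  · simp [amalgLen_eq_zero_of_mem_inf hG.2 (mul_mem hk hg)]
  · simp [amalgLen_eq_zero_of_mem_inf hG.2 hk]
  · have hw' := hw.cons_of_sameFactor (sameFactor_mem_inf_mul hk a).symm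
    have hp : k * (a :: u).prod = (k * a :: u).prod := by simp [mul_assoc]
    rw [hp, hw'.amalgLen_prod hG.2, hw.amalgLen_prod hG.2, List.length_cons, List.length_cons]

theorem amalgLen_mul_le (hG : IsAmalgamatedProduct A B) (g g' : G) :
    amalgLen A B (g * g') ≤ amalgLen A B g + amalgLen A B g' := by
  rcases hG.mem_inf_or_exists_isReducedWord g with hg | ⟨w, hw, rfl⟩
  · rw [amalgLen_eq_zero_of_mem_inf hG.2 hg, zero_add]
    exact amalgLen_mem_inf_mul_le hG hg g'
  rw [hw.amalgLen_prod hG.2]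
  induction w with
  | nil => simp
  | cons x u ih =>
    obtain ⟨hx, -, hu⟩ := isReducedWord_cons.1 hw
    calc amalgLen A B ((x :: u).prod * g') = amalgLen A B (x * (u.prod * g')) := by
          rw [List.prod_cons, mul_assoc]
      _ ≤ amalgLen A B (u.prod * g') + 1 := amalgLen_mul_le_add_one hG hx.1 _
      _ ≤ u.length + amalgLen A B g' + 1 := by gcongr; exact ih hu
      _ = (x :: u).length + amalgLen A B g' := by simp; ring

theorem amalgLen_mem_inf_mul_mul_mem_inf (hG : IsAmalgamatedProduct A B) {k₁ k₂ : G}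
    (hk₁ : k₁ ∈ A ⊓ B) (hk₂ : k₂ ∈ A ⊓ B) (g : G) :
    amalgLen A B (k₁ * g * k₂) = amalgLen A B g := by
  have key : ∀ {k₁ k₂ : G} (g : G), k₁ ∈ A ⊓ B → k₂ ∈ A ⊓ B →
      amalgLen A B (k₁ * g * k₂) ≤ amalgLen A B g := fun g hk₁ hk₂ =>
    calc _ ≤ amalgLen A B (_ * g) + amalgLen A B _ := amalgLen_mul_le hG _ _
      _ ≤ amalgLen A B _ + amalgLen A B g + amalgLen A B _ := by
          gcongr; exact amalgLen_mul_le hG _ _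
      _ = amalgLen A B g := by
          simp [amalgLen_eq_zero_of_mem_inf hG.2 hk₁, amalgLen_eq_zero_of_mem_inf hG.2 hk₂]
  refine le_antisymm (key g hk₁ hk₂) ?_
  simpa [mul_assoc] using key (k₁ * g * k₂) (inv_mem hk₁) (inv_mem hk₂)

theorem BoundedElement.conj (hG : IsAmalgamatedProduct A B) (hg : BoundedElement A B g)
    (c : G) : BoundedElement A B (c * g * c⁻¹) := by
  obtain ⟨N, hN⟩ := hg
  refine ⟨amalgLen A B c + N + amalgLen A B c⁻¹, ?_⟩
  rintro _ ⟨n, rfl⟩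
  calc amalgLen A B ((c * g * c⁻¹) ^ n) = amalgLen A B (c * g ^ n * c⁻¹) := by rw [conj_zpow]
    _ ≤ amalgLen A B (c * g ^ n) + amalgLen A B c⁻¹ := amalgLen_mul_le hG _ _
    _ ≤ amalgLen A B c + amalgLen A B (g ^ n) + amalgLen A B c⁻¹ := by
        gcongr; exact amalgLen_mul_le hG _ _
    _ ≤ amalgLen A B c + N + amalgLen A B c⁻¹ := by
        gcongr; exact hN _ (Subgroup.zpow_mem_zpowers g n)

end Subadditivity

section Bounded

variable {A B : Subgroup G} {x y : G} {m w : List G}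

def IsCyclicallyReduced (A B : Subgroup G) (w : List G) : Prop :=
  IsReducedWord A B w ∧ ∀ x ∈ w.getLast?, ∀ y ∈ w.head?, Alternate A B x y

theorem IsCyclicallyReduced.isReducedWord_flatten_replicate (hw : IsCyclicallyReduced A B w)
    (hne : w ≠ []) (n : ℕ) : IsReducedWord A B (List.replicate n w).flatten := by
  refine isReducedWord_iff.2 ⟨fun x hx => ?_, (List.isChain_flatten ?_).2 ⟨?_, ?_⟩⟩
  · obtain ⟨l, hl, hx⟩ := List.mem_flatten.1 hx
    exact hw.1.1 x (List.eq_of_mem_replicate hl ▸ hx)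
  · exact fun h => hne (List.eq_of_mem_replicate h).symm
  · exact fun l hl => List.eq_of_mem_replicate hl ▸ hw.1.2
  · exact List.isChain_replicate_of_rel n hw.2

theorem IsCyclicallyReduced.not_boundedElement (hAB : ReducedProdNeOne A B)
    (hw : IsCyclicallyReduced A B w) (hne : w ≠ []) : ¬BoundedElement A B w.prod := by
  rintro ⟨N, hN⟩
  have hpow := hN _ (Subgroup.npow_mem_zpowers w.prod (N + 1))
  have hred := hw.isReducedWord_flatten_replicate hne (N + 1)
  rw [← List.prod_replicate, ← List.map_replicate, ← List.prod_flatten,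
    hred.amalgLen_prod hAB] at hpow
  have : N + 1 ≤ (N + 1) * w.length := Nat.le_mul_of_pos_right _ (List.length_pos_iff.2 hne)
  simp at hpow
  omega

theorem IsReducedWord.mul_mem_inf_of_boundedElement (hG : IsAmalgamatedProduct A B)
    (hw : IsReducedWord A B (x :: m ++ [y])) (hb : BoundedElement A B (x :: m ++ [y]).prod) :
    y * x ∈ A ⊓ B := by
  by_contra hyx
  obtain ⟨hxm, hy, hjun⟩ := isReducedWord_append.1 hw
  have hxL := (isReducedWord_cons.1 hxm).1
  have hyL := isReducedWord_singleton.1 hy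
  by_cases halt : Alternate A B y x
  · refine IsCyclicallyReduced.not_boundedElement hG.2 ⟨hw, fun a ha b hb => ?_⟩ (by simp) hb
    rw [List.getLast?_concat, Option.mem_some_iff] at ha
    rw [List.cons_append, List.head?_cons, Option.mem_some_iff] at hb
    exact ha ▸ hb ▸ halt
  have hs := hyL.sameFactor_of_not_alternate hxL halt
  obtain ⟨-, hyx_y⟩ := hyL.mul hs hyx
  obtain ⟨z, m, rfl⟩ : ∃ z m', m = z :: m' := by
    rcases m with _ | ⟨z, m⟩
    · exact absurd (Alternate.symm (by simpa using hjun)) halt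
    · exact ⟨z, m, rfl⟩
  have hc : IsCyclicallyReduced A B (y * x :: z :: m) := by
    refine ⟨hxm.cons_of_sameFactor (hs.symm.trans hyx_y.symm), fun a ha b hb => ?_⟩
    obtain rfl : b = y * x := by simpa using hb.symm
    exact (hjun a (by simpa using ha) y rfl).of_sameFactor (.refl a) hyx_y.symm
  refine hc.not_boundedElement hG.2 (List.cons_ne_nil _ _) ?_
  have hp : (y * x :: z :: m).prod = y * (x :: z :: m ++ [y]).prod * y⁻¹ := by simp [mul_assoc]
  exact hp ▸ hb.conj hG y

end Bounded

section Conjugation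

variable {A B : Subgroup G} {h x y x' y' z : G} {m m' : List G}

theorem IsReducedWord.amalgLen_prod_le_amalgLen_conj (hAB : ReducedProdNeOne A B)
    (hw : IsReducedWord A B (x :: m ++ [y])) (hyx : y * x ∈ A ⊓ B) (hh : IsLetter A B h)
    (hhx : h * x ∉ A ⊓ B) :
    amalgLen A B (x :: m ++ [y]).prod ≤ amalgLen A B (h * (x :: m ++ [y]).prod * h⁻¹) := by
  have hyh : y * h⁻¹ ∉ A ⊓ B := fun hyh => hhx <| by
    rw [show h * x = (y * h⁻¹)⁻¹ * (y * x) by group]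
    exact mul_mem (inv_mem hyh) hyx
  obtain ⟨c, hc, hred, hprod⟩ := IsReducedWord.exists_join_of_mul_notMem (u := [])
    (isReducedWord_singleton.2 hh) (by simpa using hw) hhx
  obtain ⟨c', hc', hred', hprod'⟩ := (show IsReducedWord A B (c ++ m ++ [y]) by simpa using hred)
    |>.exists_join_of_mul_notMem
      (isReducedWord_singleton.2 (hh.of_sameFactor (sameFactor_inv h).symm)) hyh
  have hp : (c ++ m ++ c' ++ []).prod = h * (x :: m ++ [y]).prod * h⁻¹ := by
    simp only [List.nil_append] at hprod
    rw [hprod', List.append_assoc, hprod]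
    simp [mul_assoc]
  rw [hw.amalgLen_prod hAB, ← hp, hred'.amalgLen_prod hAB]
  rcases hc with rfl | rfl <;> rcases hc' with rfl | rfl <;> simp

theorem IsReducedWord.amalgLen_conj (hG : IsAmalgamatedProduct A B)
    (hw : IsReducedWord A B (x :: m ++ [y])) (hyx : y * x ∈ A ⊓ B) (hhx : h * x ∈ A ⊓ B) :
    amalgLen A B (h * (x :: m ++ [y]).prod * h⁻¹) = m.length := by
  have hm := (isReducedWord_cons.1 (isReducedWord_append.1 hw).1).2.2
  have hyh : y * h⁻¹ ∈ A ⊓ B := by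
    rw [show y * h⁻¹ = y * x * (h * x)⁻¹ by group]
    exact mul_mem hyx (inv_mem hhx)
  rw [show h * (x :: m ++ [y]).prod * h⁻¹ = h * x * m.prod * (y * h⁻¹) by simp [mul_assoc],
    amalgLen_mem_inf_mul_mul_mem_inf hG hhx hyh, hm.amalgLen_prod hG.2]

theorem IsReducedWord.mul_mem_inf_of_boundedElement_mul (hG : IsAmalgamatedProduct A B)
    (hw : IsReducedWord A B (x :: m ++ [y])) (hw' : IsReducedWord A B (x' :: m' ++ [y']))
    (hyx : y * x ∈ A ⊓ B) (hyx' : y' * x' ∈ A ⊓ B)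
    (hb : BoundedElement A B ((x :: m ++ [y]).prod * (x' :: m' ++ [y']).prod)) :
    y * x' ∈ A ⊓ B := by
  by_contra hyx''
  obtain ⟨c, -, hred, hprod⟩ := hw.exists_join_of_mul_notMem (by simpa using hw') hyx''
  have hp : (x :: (m ++ c ++ m') ++ [y']).prod =
      (x :: m ++ [y]).prod * (x' :: m' ++ [y']).prod := by
    simpa [mul_assoc] using hprod
  have hy'x := (show IsReducedWord A B (x :: (m ++ c ++ m') ++ [y']) by simpa using hred)
    |>.mul_mem_inf_of_boundedElement hG (hp ▸ hb)
  refine hyx'' ?_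
  rw [show y * x' = y * x * (y' * x)⁻¹ * (y' * x') by group]
  exact mul_mem (mul_mem hyx (inv_mem hy'x)) hyx'

theorem IsReducedWord.sameFactor_of_boundedElement_mul (hG : IsAmalgamatedProduct A B)
    (hw : IsReducedWord A B (x :: m ++ [y])) (hyx : y * x ∈ A ⊓ B) (hz : IsLetter A B z)
    (hb : BoundedElement A B ((x :: m ++ [y]).prod * z)) : SameFactor A B x z := by
  by_cases halt : Alternate A B y z
  · have hred : IsReducedWord A B (x :: m ++ [y] ++ [z]) := by
      refine isReducedWord_append.2 ⟨hw, isReducedWord_singleton.2 hz, ?_⟩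
      rw [List.getLast?_concat]
      simpa using halt
    have hzx := (show IsReducedWord A B (x :: (m ++ [y]) ++ [z]) by simpa using hred)
      |>.mul_mem_inf_of_boundedElement hG (by simpa [mul_assoc] using hb)
    exact (sameFactor_of_mul_mem_inf hzx).symm
  · have hyL := isReducedWord_singleton.1 (isReducedWord_append.1 hw).2.1
    exact (sameFactor_of_mul_mem_inf hyx).symm.trans (hyL.sameFactor_of_not_alternate hz halt)

theorem amalgLen_conj_le_one (hAB : ReducedProdNeOne A B) {g : G} (hh : IsLetter A B h)
    (hg : g ∈ A ⊓ B ∨ SameFactor A B h g) : amalgLen A B (h * g * h⁻¹) ≤ 1 := by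
  have hgA : h ∈ A → g ∈ A := hg.elim (fun hg _ => (Subgroup.mem_inf.1 hg).1) (·.1.1)
  have hgB : h ∈ B → g ∈ B := hg.elim (fun hg _ => (Subgroup.mem_inf.1 hg).2) (·.2.1)
  exact amalgLen_le_one_of_mem hAB <|
    hh.1.imp (fun hA => mul_mem (mul_mem hA (hgA hA)) (inv_mem hA))
      (fun hB => mul_mem (mul_mem hB (hgB hB)) (inv_mem hB))

end Conjugation

theorem stmt2 (A B : Subgroup G) (hG : IsAmalgamatedProduct A B)
    (g₁ g₂ h : G)
    (hb1 : BoundedElement A B g₁) (hb2 : BoundedElement A B g₂)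
    (hb12 : BoundedElement A B (g₁ * g₂))
    (hl1 : 1 < amalgLen A B g₁)
    (hh : amalgLen A B h = 1)
    (hred : amalgLen A B (h * g₁ * h⁻¹) < amalgLen A B g₁) :
    amalgLen A B (h * g₁ * h⁻¹) = amalgLen A B g₁ - 2 ∧
      (1 < amalgLen A B g₂ → amalgLen A B (h * g₂ * h⁻¹) = amalgLen A B g₂ - 2) ∧
      (amalgLen A B g₂ ≤ 1 → amalgLen A B (h * g₂ * h⁻¹) ≤ 1) := by
  have hLh := isLetter_of_amalgLen_eq_one hh
  obtain ⟨x, m, y, hw₁, rfl, hl₁⟩ := exists_isReducedWord_of_one_lt_amalgLen hl1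
  have hyx := hw₁.mul_mem_inf_of_boundedElement hG hb1
  have hhx : h * x ∈ A ⊓ B := by
    by_contra hhx
    exact (hw₁.amalgLen_prod_le_amalgLen_conj hG.2 hyx hLh hhx).not_gt hred
  refine ⟨by rw [hw₁.amalgLen_conj hG hyx hhx, hl₁]; rfl, fun hl2 => ?_, fun hl2 => ?_⟩
  · obtain ⟨x₂, m₂, y₂, hw₂, rfl, hl₂⟩ := exists_isReducedWord_of_one_lt_amalgLen hl2
    have hyx₂ := hw₂.mul_mem_inf_of_boundedElement hG hb2
    have hyx₁₂ := hw₁.mul_mem_inf_of_boundedElement_mul hG hw₂ hyx hyx₂ hb12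
    have hhx₂ : h * x₂ ∈ A ⊓ B := by
      rw [show h * x₂ = h * x * (y * x)⁻¹ * (y * x₂) by group]
      exact mul_mem (mul_mem hhx (inv_mem hyx)) hyx₁₂
    rw [hw₂.amalgLen_conj hG hyx₂ hhx₂, hl₂]
    rfl
  · refine amalgLen_conj_le_one hG.2 hLh <|
      (mem_inf_or_isLetter_of_amalgLen_le_one hG hl2).imp_right fun hz => ?_
    exact (sameFactor_of_mul_mem_inf hhx).trans
      (hw₁.sameFactor_of_boundedElement_mul hG hyx hz hb12)
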